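/- arXiv:1810.00173 — 8 statements merged into one kernel-verified Lean document; each statement's English description precedes it below -/
import Mathlib

section
/- Let ζ, θ, ω, u, v, p, q : ℝ → ℝ be differentiable with, for all t: sin(ζ t) ≠ 0, sin(θ t) ≠ 0, u′(t) = cos(ζ t)/sin(ζ t), v′(t) = cos(θ t)/(sin(ζ t)·sin(θ t)), ω′(t) = √(ζ′(t)²·sin(θ t)² + θ′(t)²), p′(t) = sin(ω t)/(sin(ζ t)·sin(θ t)), q′(t) = cos(ω t)/(sin(ζ t)·sin(θ t)). Define F : ℝ² → ℝ³ by F(t,s) = (t − s·sin(θ t)·sin(ζ t), u t − s·sin(θ t)·cos(ζ t), v t − s·cos(θ t)) and G : ℝ² → ℝ² by G(t,s) = (p t − s·sin(ω t), q t − s·cos(ω t)). Then the first fundamental forms of F and G coincide: at every (t,s), ⟨∂F/∂t, ∂F/∂t⟩ = ⟨∂G/∂t, ∂G/∂t⟩, ⟨∂F/∂t, ∂F/∂s⟩ = ⟨∂G/∂t, ∂G/∂s⟩, and ⟨∂F/∂s, ∂F/∂s⟩ = ⟨∂G/∂s, ∂G/∂s⟩ = 1 (inner products taken in ℝ³ and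 ℝ² respectively). Hence the tangent-developable surface parametrized by F is unfolded onto the plane by G without distortion. -/
open Real
open scoped RealInnerProductSpace

/-- Euler's parametrization of a developable (tangent) surface:
the point at distance `s` along the tangent line of the space curve
`t ↦ (t, u t, v t)`, in terms of the angles `ζ`, `θ`. -/
noncomputable def eulerF (ζ θ u v : ℝ → ℝ) (w : ℝ × ℝ) : EuclideanSpace ℝ (Fin 3) :=
  WithLp.toLp 2 ![w.1 - w.2 * sin (θ w.1) * sin (ζ w.1),
    u w.1 - w.2 * sin (θ w.1) * cos (ζ w.1),
    v w.1 - w.2 * cos (θ w.1)]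

/-- Euler's parametrization of the planar figure onto which the surface is unfolded. -/
noncomputable def eulerG (ω p q : ℝ → ℝ) (w : ℝ × ℝ) : EuclideanSpace ℝ (Fin 2) :=
  WithLp.toLp 2 ![p w.1 - w.2 * sin (ω w.1),
    q w.1 - w.2 * cos (ω w.1)]

/-!
Both `eulerF` and `eulerG` are ruled surfaces `(t, s) ↦ γ t - s • e t` whose rulings `e` are unit
vectors and whose base curves are tangent to the rulings, `γ' = λ • e`. For such a surface
`e ⊥ e'` (since `‖e‖ = 1`), so the first fundamental form is `E = λ² + s² ‖e'‖²`, `F = -λ`,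
`G = 1`. Euler's conditions give both surfaces the same `λ = 1 / (sin ζ · sin θ)`, and the
condition on `ω'` says exactly that the two rulings have the same speed `‖e'‖`.
-/

section PiLp

variable {𝕜 ι : Type*} {E : ι → Type*} [NontriviallyNormedField 𝕜] [Fintype ι]
  [∀ i, NormedAddCommGroup (E i)] [∀ i, NormedSpace 𝕜 (E i)] (p : ENNReal) [Fact (1 ≤ p)]

theorem hasDerivAt_piLp {f : 𝕜 → PiLp p E} {f' : PiLp p E} {x : 𝕜} :
    HasDerivAt f f' x ↔ ∀ i, HasDerivAt (fun y => f y i) (f' i) x := by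
  simp_rw [← hasDerivWithinAt_univ, hasDerivWithinAt_iff_hasFDerivWithinAt,
    hasFDerivWithinAt_piLp]
  rfl

end PiLp

section RuledSurface

variable {E : Type*} [NormedAddCommGroup E] [InnerProductSpace ℝ E]

def ruledSurface (γ e : ℝ → E) (w : ℝ × ℝ) : E := γ w.1 - w.2 • e w.1

theorem inner_eq_zero_of_hasDerivAt_of_norm_eq_one {e : ℝ → E} {e' : E} {t : ℝ}
    (he : HasDerivAt e e' t) (he₁ : ∀ x, ‖e x‖ = 1) : ⟪e t, e'⟫ = 0 := by
  have hconst : HasDerivAt (‖e ·‖ ^ 2) 0 t := by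
    simpa [he₁] using hasDerivAt_const t (1 : ℝ)
  linarith [he.norm_sq.unique hconst]

theorem hasDerivAt_ruledSurface_fst {γ e : ℝ → E} {γ' e' : E} {t : ℝ}
    (hγ : HasDerivAt γ γ' t) (he : HasDerivAt e e' t) (s : ℝ) :
    HasDerivAt (fun t' => ruledSurface γ e (t', s)) (γ' - s • e') t :=
  hγ.sub (he.const_smul s)

theorem hasDerivAt_ruledSurface_snd (γ e : ℝ → E) (t s : ℝ) :
    HasDerivAt (fun s' => ruledSurface γ e (t, s')) (-e t) s := by
  simpa [ruledSurface] using ((hasDerivAt_id s).smul_const (e t)).const_sub (γ t)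

theorem ruledSurface_first_fundamental_form {γ e : ℝ → E} {l t : ℝ}
    (hγ : HasDerivAt γ (l • e t) t) (he : DifferentiableAt ℝ e t) (he₁ : ∀ x, ‖e x‖ = 1)
    (s : ℝ) :
    ⟪deriv (fun t' => ruledSurface γ e (t', s)) t,
        deriv (fun t' => ruledSurface γ e (t', s)) t⟫ = l ^ 2 + s ^ 2 * ‖deriv e t‖ ^ 2 ∧
      ⟪deriv (fun t' => ruledSurface γ e (t', s)) t,
        deriv (fun s' => ruledSurface γ e (t, s')) s⟫ = -l ∧
      ⟪deriv (fun s' => ruledSurface γ e (t, s')) s,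
        deriv (fun s' => ruledSurface γ e (t, s')) s⟫ = 1 := by
  have horth := inner_eq_zero_of_hasDerivAt_of_norm_eq_one he.hasDerivAt he₁
  rw [(hasDerivAt_ruledSurface_fst hγ he.hasDerivAt s).deriv,
    (hasDerivAt_ruledSurface_snd γ e t s).deriv]
  refine ⟨?_, ?_, ?_⟩ <;>
    simp only [inner_sub_left, inner_sub_right, inner_neg_right, real_inner_smul_left,
      real_inner_smul_right, real_inner_self_eq_norm_sq, he₁, horth, real_inner_comm (e t),
      norm_smul, mul_pow, norm_eq_abs, sq_abs] <;>
    ring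

end RuledSurface

noncomputable def eulerCurve (u v : ℝ → ℝ) (t : ℝ) : EuclideanSpace ℝ (Fin 3) :=
  WithLp.toLp 2 ![t, u t, v t]

noncomputable def eulerDirection (ζ θ : ℝ → ℝ) (t : ℝ) : EuclideanSpace ℝ (Fin 3) :=
  WithLp.toLp 2 ![sin (θ t) * sin (ζ t), sin (θ t) * cos (ζ t), cos (θ t)]

noncomputable def planeCurve (p q : ℝ → ℝ) (t : ℝ) : EuclideanSpace ℝ (Fin 2) :=
  WithLp.toLp 2 ![p t, q t]

noncomputable def planeDirection (ω : ℝ → ℝ) (t : ℝ) : EuclideanSpace ℝ (Fin 2) :=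
  WithLp.toLp 2 ![sin (ω t), cos (ω t)]

theorem eulerF_eq_ruledSurface (ζ θ u v : ℝ → ℝ) :
    eulerF ζ θ u v = ruledSurface (eulerCurve u v) (eulerDirection ζ θ) := by
  ext w i
  fin_cases i <;> simp [eulerF, ruledSurface, eulerCurve, eulerDirection, mul_assoc]

theorem eulerG_eq_ruledSurface (ω p q : ℝ → ℝ) :
    eulerG ω p q = ruledSurface (planeCurve p q) (planeDirection ω) := by
  ext w i
  fin_cases i <;> simp [eulerG, ruledSurface, planeCurve, planeDirection]

theorem norm_eulerDirection (ζ θ : ℝ → ℝ) (t : ℝ) : ‖eulerDirection ζ θ t‖ = 1 := by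
  rw [EuclideanSpace.norm_eq, sqrt_eq_one]
  simp only [eulerDirection, Fin.sum_univ_succ, Fin.sum_univ_zero, PiLp.toLp_apply, norm_eq_abs,
    sq_abs, Matrix.cons_val_zero, Matrix.cons_val_succ]
  linear_combination sin (θ t) ^ 2 * sin_sq_add_cos_sq (ζ t) + sin_sq_add_cos_sq (θ t)

theorem norm_planeDirection (ω : ℝ → ℝ) (t : ℝ) : ‖planeDirection ω t‖ = 1 := by
  rw [EuclideanSpace.norm_eq, sqrt_eq_one]
  simp [planeDirection, sin_sq_add_cos_sq]

section Derivatives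

variable {ζ θ ω u v p q : ℝ → ℝ} {ζ' θ' ω' t k : ℝ}

theorem hasDerivAt_eulerDirection (hζ : HasDerivAt ζ ζ' t) (hθ : HasDerivAt θ θ' t) :
    HasDerivAt (eulerDirection ζ θ)
      (WithLp.toLp 2 ![cos (θ t) * θ' * sin (ζ t) + sin (θ t) * (cos (ζ t) * ζ'),
        cos (θ t) * θ' * cos (ζ t) + sin (θ t) * (-sin (ζ t) * ζ'), -sin (θ t) * θ']) t := by
  simp only [hasDerivAt_piLp, Fin.forall_fin_succ]
  exact ⟨hθ.sin.mul hζ.sin, hθ.sin.mul hζ.cos, hθ.cos, finZeroElim⟩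

theorem hasDerivAt_planeDirection (hω : HasDerivAt ω ω' t) :
    HasDerivAt (planeDirection ω) (WithLp.toLp 2 ![cos (ω t) * ω', -sin (ω t) * ω']) t := by
  simp only [hasDerivAt_piLp, Fin.forall_fin_succ]
  exact ⟨hω.sin, hω.cos, finZeroElim⟩

theorem norm_deriv_eulerDirection_sq (hζ : HasDerivAt ζ ζ' t) (hθ : HasDerivAt θ θ' t) :
    ‖deriv (eulerDirection ζ θ) t‖ ^ 2 = ζ' ^ 2 * sin (θ t) ^ 2 + θ' ^ 2 := by
  rw [(hasDerivAt_eulerDirection hζ hθ).deriv, EuclideanSpace.real_norm_sq_eq]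
  simp only [Fin.sum_univ_succ, Fin.sum_univ_zero, Matrix.cons_val_zero, Matrix.cons_val_succ]
  linear_combination (ζ' ^ 2 * sin (θ t) ^ 2 + θ' ^ 2 * cos (θ t) ^ 2) * sin_sq_add_cos_sq (ζ t)
    + θ' ^ 2 * sin_sq_add_cos_sq (θ t)

theorem norm_deriv_planeDirection_sq (hω : HasDerivAt ω ω' t) :
    ‖deriv (planeDirection ω) t‖ ^ 2 = ω' ^ 2 := by
  rw [(hasDerivAt_planeDirection hω).deriv, EuclideanSpace.real_norm_sq_eq]
  simp only [Fin.sum_univ_succ, Fin.sum_univ_zero, Matrix.cons_val_zero, Matrix.cons_val_succ]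
  linear_combination ω' ^ 2 * sin_sq_add_cos_sq (ω t)

theorem hasDerivAt_eulerCurve (hζ : sin (ζ t) ≠ 0) (hθ : sin (θ t) ≠ 0)
    (hu : HasDerivAt u (cos (ζ t) / sin (ζ t)) t)
    (hv : HasDerivAt v (cos (θ t) / (sin (ζ t) * sin (θ t))) t) :
    HasDerivAt (eulerCurve u v) ((sin (ζ t) * sin (θ t))⁻¹ • eulerDirection ζ θ t) t := by
  simp only [hasDerivAt_piLp, Fin.forall_fin_succ]
  refine ⟨(hasDerivAt_id' t).congr_deriv ?_, hu.congr_deriv ?_, hv.congr_deriv ?_, finZeroElim⟩ <;>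
    simp only [eulerDirection, PiLp.smul_apply, smul_eq_mul, Matrix.cons_val_zero,
      Matrix.cons_val_succ] <;>
    field_simp

theorem hasDerivAt_planeCurve (hp : HasDerivAt p (sin (ω t) / k) t)
    (hq : HasDerivAt q (cos (ω t) / k) t) :
    HasDerivAt (planeCurve p q) (k⁻¹ • planeDirection ω t) t := by
  simp only [hasDerivAt_piLp, Fin.forall_fin_succ]
  exact ⟨hp.congr_deriv (div_eq_inv_mul _ _), hq.congr_deriv (div_eq_inv_mul _ _), finZeroElim⟩

end Derivatives

theorem euler_unfolding_first_fundamental_form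
    (ζ θ ω u v p q : ℝ → ℝ)
    (hζ : Differentiable ℝ ζ) (hθ : Differentiable ℝ θ) (hω : Differentiable ℝ ω)
    (hu : Differentiable ℝ u) (hv : Differentiable ℝ v)
    (hp : Differentiable ℝ p) (hq : Differentiable ℝ q)
    (hsinζ : ∀ t, sin (ζ t) ≠ 0) (hsinθ : ∀ t, sin (θ t) ≠ 0)
    (hu' : ∀ t, deriv u t = cos (ζ t) / sin (ζ t))
    (hv' : ∀ t, deriv v t = cos (θ t) / (sin (ζ t) * sin (θ t)))
    (hω' : ∀ t, deriv ω t = Real.sqrt ((deriv ζ t) ^ 2 * (sin (θ t)) ^ 2 + (deriv θ t) ^ 2))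
    (hp' : ∀ t, deriv p t = sin (ω t) / (sin (ζ t) * sin (θ t)))
    (hq' : ∀ t, deriv q t = cos (ω t) / (sin (ζ t) * sin (θ t))) :
    ∀ t s : ℝ,
      (⟪deriv (fun t' => eulerF ζ θ u v (t', s)) t,
         deriv (fun t' => eulerF ζ θ u v (t', s)) t⟫ : ℝ) =
        ⟪deriv (fun t' => eulerG ω p q (t', s)) t,
          deriv (fun t' => eulerG ω p q (t', s)) t⟫ ∧
      (⟪deriv (fun t' => eulerF ζ θ u v (t', s)) t,
         deriv (fun s' => eulerF ζ θ u v (t, s')) s⟫ : ℝ) =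
        ⟪deriv (fun t' => eulerG ω p q (t', s)) t,
          deriv (fun s' => eulerG ω p q (t, s')) s⟫ ∧
      (⟪deriv (fun s' => eulerF ζ θ u v (t, s')) s,
         deriv (fun s' => eulerF ζ θ u v (t, s')) s⟫ : ℝ) = 1 ∧
      (⟪deriv (fun s' => eulerG ω p q (t, s')) s,
         deriv (fun s' => eulerG ω p q (t, s')) s⟫ : ℝ) = 1 := by
  intro t s
  rw [eulerF_eq_ruledSurface, eulerG_eq_ruledSurface]
  have hζt := (hζ t).hasDerivAt
  have hθt := (hθ t).hasDerivAt
  have hωt := (hω t).hasDerivAt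
  obtain ⟨hF₁, hF₂, hF₃⟩ := ruledSurface_first_fundamental_form
    (hasDerivAt_eulerCurve (hsinζ t) (hsinθ t) (hu' t ▸ (hu t).hasDerivAt)
      (hv' t ▸ (hv t).hasDerivAt))
    (hasDerivAt_eulerDirection hζt hθt).differentiableAt (norm_eulerDirection ζ θ) s
  obtain ⟨hG₁, hG₂, hG₃⟩ := ruledSurface_first_fundamental_form
    (hasDerivAt_planeCurve (hp' t ▸ (hp t).hasDerivAt) (hq' t ▸ (hq t).hasDerivAt))
    (hasDerivAt_planeDirection hωt).differentiableAt (norm_planeDirection ω) s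
  have hspeed : ‖deriv (eulerDirection ζ θ) t‖ ^ 2 = ‖deriv (planeDirection ω) t‖ ^ 2 := by
    rw [norm_deriv_eulerDirection_sq hζt hθt, norm_deriv_planeDirection_sq hωt, hω' t,
      sq_sqrt (by positivity)]
  exact ⟨by rw [hF₁, hG₁, hspeed], by rw [hF₂, hG₂], hF₃, hG₃⟩
end

section
/- Let ζ, θ, ω, u, v, p, q : ℝ → ℝ be differentiable with, for all t: sin(ζ t) ≠ 0, sin(θ t) ≠ 0, u′(t) = cos(ζ t)/sin(ζ t), v′(t) = cos(θ t)/(sin(ζ t)·sin(θ t)), p′(t) = sin(ω t)/(sin(ζ t)·sin(θ t)), q′(t) = cos(ω t)/(sin(ζ t)·sin(θ t)). Then for every t, the space curve t ↦ (t, u t, v t) and the plane curve t ↦ (p t, q t) have equal squared speeds: 1 + u′(t)² + v′(t)² = p′(t)² + q′(t)². -/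
open Real

theorem euler_unfolding_preserves_speed_of_edge_of_regression
    (ζ θ ω u v p q : ℝ → ℝ)
    (hζ : Differentiable ℝ ζ) (hθ : Differentiable ℝ θ) (hω : Differentiable ℝ ω)
    (hu : Differentiable ℝ u) (hv : Differentiable ℝ v)
    (hp : Differentiable ℝ p) (hq : Differentiable ℝ q)
    (hsinζ : ∀ t, sin (ζ t) ≠ 0) (hsinθ : ∀ t, sin (θ t) ≠ 0)
    (hu' : ∀ t, deriv u t = cos (ζ t) / sin (ζ t))
    (hv' : ∀ t, deriv v t = cos (θ t) / (sin (ζ t) * sin (θ t)))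
    (hp' : ∀ t, deriv p t = sin (ω t) / (sin (ζ t) * sin (θ t)))
    (hq' : ∀ t, deriv q t = cos (ω t) / (sin (ζ t) * sin (θ t))) :
    ∀ t : ℝ,
      1 + (deriv u t) ^ 2 + (deriv v t) ^ 2 = (deriv p t) ^ 2 + (deriv q t) ^ 2 := by
  intro t
  have h1 := sin_sq_add_cos_sq (ζ t)
  have h2 := sin_sq_add_cos_sq (θ t)
  have h3 := sin_sq_add_cos_sq (ω t)
  have hz := hsinζ t
  have ht := hsinθ t
  rw [hu', hv', hp', hq']
  field_simp
  nlinarith [sq_nonneg (sin (ζ t) * sin (θ t)), sq_nonneg (sin (ζ t)), sq_nonneg (sin (θ t))]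
end

section
/- Let p, q, r, ω : ℝ → ℝ be differentiable functions such that for all t: p(t)² + q(t)² + r(t)² = 1, p′(t)² + q′(t)² + r′(t)² = ω′(t)², and ω′(t) ≠ 0. Define l = p·sin ω + (p′/ω′)·cos ω, m = q·sin ω + (q′/ω′)·cos ω, n = r·sin ω + (r′/ω′)·cos ω. Then for all t: l(t)² + m(t)² + n(t)² = 1. -/
open Real

theorem mul_deriv_add_mul_deriv_add_mul_deriv_eq_zero_of_sq_add_sq_add_sq_const
    {p q r : ℝ → ℝ} {c t : ℝ} (hp : DifferentiableAt ℝ p t) (hq : DifferentiableAt ℝ q t)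
    (hr : DifferentiableAt ℝ r t) (hconst : ∀ s, p s ^ 2 + q s ^ 2 + r s ^ 2 = c) :
    p t * deriv p t + q t * deriv q t + r t * deriv r t = 0 := by
  have hsum := ((hp.hasDerivAt.pow 2).add (hq.hasDerivAt.pow 2)).add (hr.hasDerivAt.pow 2)
  rw [show p ^ 2 + q ^ 2 + r ^ 2 = fun _ => c from funext hconst] at hsum
  linear_combination hsum.unique (hasDerivAt_const t c) / 2

/-- `(x, y, z)` and `(u, v, w) / ω'` are orthonormal, so every combination with coefficients
`sin θ`, `cos θ` is again a unit vector. -/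
theorem sin_mul_add_cos_mul_div_sq_sum_eq_one {x y z u v w ω' θ : ℝ}
    (hunit : x ^ 2 + y ^ 2 + z ^ 2 = 1) (horth : x * u + y * v + z * w = 0)
    (hspeed : u ^ 2 + v ^ 2 + w ^ 2 = ω' ^ 2) (hω' : ω' ≠ 0) :
    (x * sin θ + u / ω' * cos θ) ^ 2 + (y * sin θ + v / ω' * cos θ) ^ 2
      + (z * sin θ + w / ω' * cos θ) ^ 2 = 1 := by
  field_simp
  linear_combination sin θ ^ 2 * ω' ^ 2 * hunit + cos θ ^ 2 * hspeed
    + 2 * sin θ * cos θ * ω' * horth + ω' ^ 2 * sin_sq_add_cos_sq θ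

theorem euler_lmn_unit_general
    (p q r ω : ℝ → ℝ)
    (hp : Differentiable ℝ p) (hq : Differentiable ℝ q) (hr : Differentiable ℝ r)
    (hunit : ∀ t, (p t) ^ 2 + (q t) ^ 2 + (r t) ^ 2 = 1)
    (hspeed : ∀ t, (deriv p t) ^ 2 + (deriv q t) ^ 2 + (deriv r t) ^ 2 = (deriv ω t) ^ 2)
    (hω' : ∀ t, deriv ω t ≠ 0)
    (l m n : ℝ → ℝ)
    (hl : ∀ t, l t = p t * sin (ω t) + (deriv p t / deriv ω t) * cos (ω t))
    (hm : ∀ t, m t = q t * sin (ω t) + (deriv q t / deriv ω t) * cos (ω t))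
    (hn : ∀ t, n t = r t * sin (ω t) + (deriv r t / deriv ω t) * cos (ω t)) :
    ∀ t : ℝ, (l t) ^ 2 + (m t) ^ 2 + (n t) ^ 2 = 1 := by
  intro t
  rw [hl, hm, hn]
  exact sin_mul_add_cos_mul_div_sq_sum_eq_one (hunit t)
    (mul_deriv_add_mul_deriv_add_mul_deriv_eq_zero_of_sq_add_sq_add_sq_const
      (hp t) (hq t) (hr t) hunit)
    (hspeed t) (hω' t)

theorem euler_lmn_unit
    (p q r ω : ℝ → ℝ)
    (hp : Differentiable ℝ p) (hq : Differentiable ℝ q) (hr : Differentiable ℝ r)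
    (hω : Differentiable ℝ ω)
    (hunit : ∀ t, (p t) ^ 2 + (q t) ^ 2 + (r t) ^ 2 = 1)
    (hspeed : ∀ t, (deriv p t) ^ 2 + (deriv q t) ^ 2 + (deriv r t) ^ 2 = (deriv ω t) ^ 2)
    (hω' : ∀ t, deriv ω t ≠ 0)
    (l m n : ℝ → ℝ)
    (hl : ∀ t, l t = p t * sin (ω t) + (deriv p t / deriv ω t) * cos (ω t))
    (hm : ∀ t, m t = q t * sin (ω t) + (deriv q t / deriv ω t) * cos (ω t))
    (hn : ∀ t, n t = r t * sin (ω t) + (deriv r t / deriv ω t) * cos (ω t)) :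
    ∀ t : ℝ, (l t) ^ 2 + (m t) ^ 2 + (n t) ^ 2 = 1 :=
  euler_lmn_unit_general p q r ω hp hq hr hunit hspeed hω' l m n hl hm hn
end

section
/- Let p, q, r, ω : ℝ → ℝ be differentiable functions such that for all t: p(t)² + q(t)² + r(t)² = 1, p′(t)² + q′(t)² + r′(t)² = ω′(t)², and ω′(t) ≠ 0. Define l = p·sin ω + (p′/ω′)·cos ω, m = q·sin ω + (q′/ω′)·cos ω, n = r·sin ω + (r′/ω′)·cos ω, λ = p·cos ω − (p′/ω′)·sin ω, μ = q·cos ω − (q′/ω′)·sin ω, ν = r·cos ω − (r′/ω′)·sin ω. Then for all t: l(t)·λ(t) + m(t)·μ(t) + n(t)·ν(t) = 0. -/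
open Real Matrix

/-!
Put `u = (p, q, r)` and `v = (p', q', r') / ω'`. Differentiating `|u|² = 1` shows `u ⊥ u'`, and the
speed condition makes `v` a unit vector, so `u, v` is an orthonormal pair. The vectors `(l, m, n)`
and `(λ, μ, ν)` are `sin ω • u + cos ω • v` and `cos ω • u - sin ω • v`, the images of `v` and `u`
under a rotation of the plane they span, hence again orthogonal.
-/

theorem dotProduct_rotate_eq_zero {ι R : Type*} [Fintype ι] [CommRing R] {u v : ι → R}
    (hnorm : u ⬝ᵥ u = v ⬝ᵥ v) (horth : u ⬝ᵥ v = 0) (s c : R) :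
    (s • u + c • v) ⬝ᵥ (c • u - s • v) = 0 := by
  simp only [add_dotProduct, dotProduct_sub, smul_dotProduct, dotProduct_smul, smul_eq_mul,
    dotProduct_comm v u]
  linear_combination (s * c) * hnorm + (c ^ 2 - s ^ 2) * horth

theorem sum_mul_deriv_eq_zero_of_sum_sq_const {ι : Type*} [Fintype ι] {f : ι → ℝ → ℝ}
    {c t : ℝ} (hf : ∀ i, DifferentiableAt ℝ (f i) t) (hsq : ∀ s, ∑ i, f i s ^ 2 = c) :
    ∑ i, f i t * deriv (f i) t = 0 := by
  have hderiv : HasDerivAt (fun s => ∑ i, f i s ^ 2) (∑ i, 2 * f i t * deriv (f i) t) t := by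
    refine HasDerivAt.fun_sum fun i _ => ?_
    simpa using (hf i).hasDerivAt.fun_pow 2
  have hconst : HasDerivAt (fun s => ∑ i, f i s ^ 2) 0 t := by
    simpa only [hsq] using hasDerivAt_const t c
  have h2 := hderiv.unique hconst
  simp only [mul_assoc, ← Finset.mul_sum] at h2
  simpa using h2

theorem euler_jacobian_columns_orthogonal_general
    (p q r ω : ℝ → ℝ)
    (hp : Differentiable ℝ p) (hq : Differentiable ℝ q) (hr : Differentiable ℝ r)
    (hunit : ∀ t, (p t) ^ 2 + (q t) ^ 2 + (r t) ^ 2 = 1)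
    (hspeed : ∀ t, (deriv p t) ^ 2 + (deriv q t) ^ 2 + (deriv r t) ^ 2 = (deriv ω t) ^ 2)
    (hω' : ∀ t, deriv ω t ≠ 0)
    (l m n lam mu nu : ℝ → ℝ)
    (hl : ∀ t, l t = p t * sin (ω t) + (deriv p t / deriv ω t) * cos (ω t))
    (hm : ∀ t, m t = q t * sin (ω t) + (deriv q t / deriv ω t) * cos (ω t))
    (hn : ∀ t, n t = r t * sin (ω t) + (deriv r t / deriv ω t) * cos (ω t))
    (hlam : ∀ t, lam t = p t * cos (ω t) - (deriv p t / deriv ω t) * sin (ω t))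
    (hmu : ∀ t, mu t = q t * cos (ω t) - (deriv q t / deriv ω t) * sin (ω t))
    (hnu : ∀ t, nu t = r t * cos (ω t) - (deriv r t / deriv ω t) * sin (ω t)) :
    ∀ t : ℝ, l t * lam t + m t * mu t + n t * nu t = 0 := by
  intro t
  set u : Fin 3 → ℝ := ![p t, q t, r t]
  set v : Fin 3 → ℝ := ![deriv p t / deriv ω t, deriv q t / deriv ω t, deriv r t / deriv ω t]
  have hu : u ⬝ᵥ u = 1 := by
    simpa only [u, vec3_dotProduct', ← sq] using hunit t
  have hv : v ⬝ᵥ v = 1 := by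
    have := hω' t
    rw [vec3_dotProduct']
    field_simp
    linear_combination hspeed t
  have huv : u ⬝ᵥ v = 0 := by
    have h := sum_mul_deriv_eq_zero_of_sum_sq_const (f := ![p, q, r]) (t := t)
      (by simp [Fin.forall_fin_succ, hp t, hq t, hr t]) (by simpa [Fin.sum_univ_three] using hunit)
    simp only [Fin.sum_univ_three, cons_val] at h
    rw [vec3_dotProduct']
    linear_combination (deriv ω t)⁻¹ * h
  have key := dotProduct_rotate_eq_zero (hu.trans hv.symm) huv (sin (ω t)) (cos (ω t))
  rw [hl, hm, hn, hlam, hmu, hnu]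
  simp only [vec3_dotProduct, Pi.add_apply, Pi.sub_apply, Pi.smul_apply, smul_eq_mul, u, v,
    cons_val] at key
  linear_combination key

theorem euler_jacobian_columns_orthogonal
    (p q r ω : ℝ → ℝ)
    (hp : Differentiable ℝ p) (hq : Differentiable ℝ q) (hr : Differentiable ℝ r)
    (hω : Differentiable ℝ ω)
    (hunit : ∀ t, (p t) ^ 2 + (q t) ^ 2 + (r t) ^ 2 = 1)
    (hspeed : ∀ t, (deriv p t) ^ 2 + (deriv q t) ^ 2 + (deriv r t) ^ 2 = (deriv ω t) ^ 2)
    (hω' : ∀ t, deriv ω t ≠ 0)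
    (l m n lam mu nu : ℝ → ℝ)
    (hl : ∀ t, l t = p t * sin (ω t) + (deriv p t / deriv ω t) * cos (ω t))
    (hm : ∀ t, m t = q t * sin (ω t) + (deriv q t / deriv ω t) * cos (ω t))
    (hn : ∀ t, n t = r t * sin (ω t) + (deriv r t / deriv ω t) * cos (ω t))
    (hlam : ∀ t, lam t = p t * cos (ω t) - (deriv p t / deriv ω t) * sin (ω t))
    (hmu : ∀ t, mu t = q t * cos (ω t) - (deriv q t / deriv ω t) * sin (ω t))
    (hnu : ∀ t, nu t = r t * cos (ω t) - (deriv r t / deriv ω t) * sin (ω t)) :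
    ∀ t : ℝ, l t * lam t + m t * mu t + n t * nu t = 0 :=
  euler_jacobian_columns_orthogonal_general p q r ω hp hq hr hunit hspeed hω' l m n lam mu nu hl hm
    hn hlam hmu hnu
end

section
/- Let p : ℝ → ℝ be twice differentiable and define l(ω) = p(ω)·sin ω + p′(ω)·cos ω and λ(ω) = p(ω)·cos ω − p′(ω)·sin ω. Then for every ω: l′(ω)·sin ω + λ′(ω)·cos ω = 0; equivalently, wherever cos ω ≠ 0, λ′(ω) = −l′(ω)·tan ω. -/
open Real

theorem euler_most_beautiful_property
    (p : ℝ → ℝ)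
    (hp : Differentiable ℝ p) (hp' : Differentiable ℝ (deriv p))
    (l lam : ℝ → ℝ)
    (hl : ∀ ω : ℝ, l ω = p ω * sin ω + deriv p ω * cos ω)
    (hlam : ∀ ω : ℝ, lam ω = p ω * cos ω - deriv p ω * sin ω) :
    ∀ ω : ℝ,
      deriv l ω * sin ω + deriv lam ω * cos ω = 0 ∧
      (cos ω ≠ 0 → deriv lam ω = -(deriv l ω) * tan ω) := by
  intro ω
  have hle : l = fun ω => p ω * sin ω + deriv p ω * cos ω := funext hl
  have hlame : lam = fun ω => p ω * cos ω - deriv p ω * sin ω := funext hlam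
  have hL : HasDerivAt l ((deriv p ω * sin ω + p ω * cos ω) +
      (deriv (deriv p) ω * cos ω + deriv p ω * (-sin ω))) ω := by
    rw [hle]
    exact (((hp ω).hasDerivAt.mul (hasDerivAt_sin ω)).add
      ((hp' ω).hasDerivAt.mul (hasDerivAt_cos ω)))
  have hLam : HasDerivAt lam ((deriv p ω * cos ω + p ω * (-sin ω)) -
      (deriv (deriv p) ω * sin ω + deriv p ω * cos ω)) ω := by
    rw [hlame]
    exact (((hp ω).hasDerivAt.mul (hasDerivAt_cos ω)).sub
      ((hp' ω).hasDerivAt.mul (hasDerivAt_sin ω)))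
  have hdl : deriv l ω = (p ω + deriv (deriv p) ω) * cos ω := by
    rw [hL.deriv]; ring
  have hdlam : deriv lam ω = -((p ω + deriv (deriv p) ω) * sin ω) := by
    rw [hLam.deriv]; ring
  constructor
  · rw [hdl, hdlam]; ring
  · intro hc
    rw [hdl, hdlam, tan_eq_sin_div_cos]
    field_simp
end

section
/- Let ζ, θ, u, v : ℝ → ℝ be differentiable with, for all t: sin(ζ t) ≠ 0, sin(θ t) ≠ 0, u′(t) = cos(ζ t)/sin(ζ t), v′(t) = cos(θ t)/(sin(ζ t)·sin(θ t)). Fix s ∈ ℝ and define x(t) = t − s·sin(θ t)·sin(ζ t), y(t) = u t − s·sin(θ t)·cos(ζ t), z(t) = v t − s·cos(θ t). Then for every t: (i) x′(t)·cos(ζ t) − y′(t)·sin(ζ t) = −s·ζ′(t)·sin(θ t); (ii) x′(t)·sin(ζ t) + y′(t)·cos(ζ t) = 1/sin(ζ t) − s·θ′(t)·cos(θ t); (iii) x′(t)·sin(ζ t)·cos(θ t) + y′(t)·cos(ζ t)·cos(θ t) − z′(t)·sin(θ t) = −s·θ′(t). -/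
open Real

theorem euler_differential_relations
    (ζ θ u v : ℝ → ℝ)
    (hζ : Differentiable ℝ ζ) (hθ : Differentiable ℝ θ)
    (hu : Differentiable ℝ u) (hv : Differentiable ℝ v)
    (hsinζ : ∀ t, sin (ζ t) ≠ 0) (hsinθ : ∀ t, sin (θ t) ≠ 0)
    (hu' : ∀ t, deriv u t = cos (ζ t) / sin (ζ t))
    (hv' : ∀ t, deriv v t = cos (θ t) / (sin (ζ t) * sin (θ t)))
    (s : ℝ) (x y z : ℝ → ℝ)
    (hx : ∀ t, x t = t - s * sin (θ t) * sin (ζ t))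
    (hy : ∀ t, y t = u t - s * sin (θ t) * cos (ζ t))
    (hz : ∀ t, z t = v t - s * cos (θ t)) :
    ∀ t : ℝ,
      deriv x t * cos (ζ t) - deriv y t * sin (ζ t) = -s * deriv ζ t * sin (θ t) ∧
      deriv x t * sin (ζ t) + deriv y t * cos (ζ t) =
        1 / sin (ζ t) - s * deriv θ t * cos (θ t) ∧
      deriv x t * sin (ζ t) * cos (θ t) + deriv y t * cos (ζ t) * cos (θ t) -
        deriv z t * sin (θ t) = -s * deriv θ t := by
  have hxe : x = fun t => t - s * sin (θ t) * sin (ζ t) := funext hx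
  have hye : y = fun t => u t - s * sin (θ t) * cos (ζ t) := funext hy
  have hze : z = fun t => v t - s * cos (θ t) := funext hz
  subst hxe hye hze
  intro t
  have hζt : HasDerivAt ζ (deriv ζ t) t := (hζ t).hasDerivAt
  have hθt : HasDerivAt θ (deriv θ t) t := (hθ t).hasDerivAt
  have hut : HasDerivAt u (cos (ζ t) / sin (ζ t)) t := by
    rw [← hu' t]; exact (hu t).hasDerivAt
  have hvt : HasDerivAt v (cos (θ t) / (sin (ζ t) * sin (θ t))) t := by
    rw [← hv' t]; exact (hv t).hasDerivAt
  have hsθ : HasDerivAt (fun t => sin (θ t)) (cos (θ t) * deriv θ t) t := hθt.sin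
  have hcθ : HasDerivAt (fun t => cos (θ t)) (-sin (θ t) * deriv θ t) t := hθt.cos
  have hsζ : HasDerivAt (fun t => sin (ζ t)) (cos (ζ t) * deriv ζ t) t := hζt.sin
  have hcζ : HasDerivAt (fun t => cos (ζ t)) (-sin (ζ t) * deriv ζ t) t := hζt.cos
  have hX : HasDerivAt (fun t => t - s * sin (θ t) * sin (ζ t))
      (1 - (s * (cos (θ t) * deriv θ t) * sin (ζ t) +
        s * sin (θ t) * (cos (ζ t) * deriv ζ t))) t :=
    (hasDerivAt_id t).sub (((hsθ.const_mul s).mul hsζ))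
  have hY : HasDerivAt (fun t => u t - s * sin (θ t) * cos (ζ t))
      (cos (ζ t) / sin (ζ t) - (s * (cos (θ t) * deriv θ t) * cos (ζ t) +
        s * sin (θ t) * (-sin (ζ t) * deriv ζ t))) t :=
    hut.sub ((hsθ.const_mul s).mul hcζ)
  have hZ : HasDerivAt (fun t => v t - s * cos (θ t))
      (cos (θ t) / (sin (ζ t) * sin (θ t)) - s * (-sin (θ t) * deriv θ t)) t :=
    hvt.sub (hcθ.const_mul s)
  rw [hX.deriv, hY.deriv, hZ.deriv]
  have h1 : sin (ζ t) ^ 2 + cos (ζ t) ^ 2 = 1 := sin_sq_add_cos_sq _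
  have h2 : sin (θ t) ^ 2 + cos (θ t) ^ 2 = 1 := sin_sq_add_cos_sq _
  have hi1 : sin (ζ t) * (sin (ζ t))⁻¹ = 1 := mul_inv_cancel₀ (hsinζ t)
  have hi2 : sin (θ t) * (sin (θ t))⁻¹ = 1 := mul_inv_cancel₀ (hsinθ t)
  refine ⟨?_, ?_, ?_⟩
  · linear_combination (-(s * sin (θ t) * deriv ζ t)) * h1 - cos (ζ t) * hi1
  · linear_combination (1 / sin (ζ t) - s * cos (θ t) * deriv θ t) * h1 - sin (ζ t) * hi1
  · linear_combination (cos (θ t) / sin (ζ t) - s * deriv θ t * cos (θ t) ^ 2) * h1 -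
      s * deriv θ t * h2 - cos (θ t) * sin (ζ t) * hi1 - cos (θ t) / sin (ζ t) * hi2
end

section
/- Let T, U, t, u, φ : ℝ → ℝ be differentiable with U′(x) = φ(x)·T′(x) and u′(x) = φ(x)·t′(x) for all x, and let a ≠ 0 be a real number. Then for every x, the three vectors in ℝ³: D(x) = (a, t(x) − T(x), u(x) − U(x)) (the direction of the boundary light ray), D′(x) = (0, t′(x) − T′(x), u′(x) − U′(x)), and (0, T′(x), U′(x)) (the tangent of the directrix) are linearly dependent; equivalently, the 3×3 determinant with these rows vanishes. -/
/-! Both derivative rows have vanishing first entry, and by `dU = φ dT`, `du = φ dt` their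
remaining entries are multiples of `(1, φ)`: the lower rows span at most a line in the plane
`x₁ = 0`, so the three vectors are dependent and the determinant vanishes. -/

theorem Matrix.det_eq_zero_of_lower_rows_parallel {R : Type*} [CommRing R] (a b c d f φ : R) :
    (Matrix.of ![![a, b, c], ![0, d, φ * d], ![0, f, φ * f]]).det = 0 := by
  rw [Matrix.det_fin_three]
  simp only [Matrix.of_apply, Matrix.cons_val, Matrix.cons_val_zero, Matrix.cons_val_one]
  ring

theorem Matrix.not_linearIndependent_rows_of_det_eq_zero {K m : Type*} [Field K] [Fintype m]
    [DecidableEq m] {A : Matrix m m K} (hA : A.det = 0) : ¬ LinearIndependent K A.row := by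
  rw [Matrix.linearIndependent_rows_iff_isUnit, Matrix.isUnit_iff_isUnit_det, hA]
  exact not_isUnit_zero

theorem euler_shadow_rays_coplanar_general
    (T U t u φ : ℝ → ℝ)
    (hU' : ∀ x, deriv U x = φ x * deriv T x)
    (hu' : ∀ x, deriv u x = φ x * deriv t x)
    (a : ℝ) :
    ∀ x : ℝ,
      ¬ LinearIndependent ℝ
          ![(![a, t x - T x, u x - U x] : Fin 3 → ℝ),
            ![0, deriv t x - deriv T x, deriv u x - deriv U x],
            ![0, deriv T x, deriv U x]] ∧
      (Matrix.of
          ![(![a, t x - T x, u x - U x] : Fin 3 → ℝ),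
            ![0, deriv t x - deriv T x, deriv u x - deriv U x],
            ![0, deriv T x, deriv U x]]).det = 0 := by
  intro x
  have hdiff : deriv u x - deriv U x = φ x * (deriv t x - deriv T x) := by
    rw [hu', hU']
    ring
  have hdet : (Matrix.of
      ![(![a, t x - T x, u x - U x] : Fin 3 → ℝ),
        ![0, deriv t x - deriv T x, deriv u x - deriv U x],
        ![0, deriv T x, deriv U x]]).det = 0 := by
    rw [hdiff, hU']
    exact Matrix.det_eq_zero_of_lower_rows_parallel ..
  exact ⟨Matrix.not_linearIndependent_rows_of_det_eq_zero hdet, hdet⟩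

theorem euler_shadow_rays_coplanar
    (T U t u φ : ℝ → ℝ)
    (hT : Differentiable ℝ T) (hU : Differentiable ℝ U)
    (ht : Differentiable ℝ t) (hu : Differentiable ℝ u)
    (hU' : ∀ x, deriv U x = φ x * deriv T x)
    (hu' : ∀ x, deriv u x = φ x * deriv t x)
    (a : ℝ) (ha : a ≠ 0) :
    ∀ x : ℝ,
      ¬ LinearIndependent ℝ
          ![(![a, t x - T x, u x - U x] : Fin 3 → ℝ),
            ![0, deriv t x - deriv T x, deriv u x - deriv U x],
            ![0, deriv T x, deriv U x]] ∧
      (Matrix.of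
          ![(![a, t x - T x, u x - U x] : Fin 3 → ℝ),
            ![0, deriv t x - deriv T x, deriv u x - deriv U x],
            ![0, deriv T x, deriv U x]]).det = 0 :=
  euler_shadow_rays_coplanar_general T U t u φ hU' hu' a
end

section
/- Let P, Q, R, S : ℝ → ℝ be differentiable functions satisfying S′(φ)·P′(φ) = Q′(φ)·R′(φ) for all φ. For the ruled surface σ(x, φ) = (x, P(φ) + Q(φ)·x, R(φ) + S(φ)·x) in ℝ³, define the normal vector N(x, φ) as the cross product of the two tangent vectors ∂σ/∂x = (1, Q(φ), S(φ)) and ∂σ/∂φ = (0, P′(φ) + Q′(φ)·x, R′(φ) + S′(φ)·x). Then the normal direction is constant along each ruling: for all x₁, x₂, φ, the cross product N(x₁, φ) × N(x₂, φ) = 0. -/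
/-!
Along a ruling the normal is `N(x) = u ⨯₃ (p + x • q)` with `u = (1, Q, S)`, `p = (0, P', R')`,
`q = (0, Q', S')`, i.e. affine in `x`, so `N(x₁) ⨯₃ N(x₂) = (x₂ - x₁) • (u ⨯₃ p) ⨯₃ (u ⨯₃ q)`.
By the vector triple product, `(u ⨯₃ p) ⨯₃ (u ⨯₃ q)` is `u` scaled by the triple product
`u ⬝ᵥ p ⨯₃ q = P'S' - R'Q'`, which Euler's condition makes vanish.
-/

open scoped Matrix

/-- The normal vector of Euler's ruled surface `σ(x, φ) = (x, P φ + Q φ * x, R φ + S φ * x)`: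
the cross product of the tangent vectors `∂σ/∂x` and `∂σ/∂φ`. -/
noncomputable def eulerNormal (P Q R S : ℝ → ℝ) (x φ : ℝ) : Fin 3 → ℝ :=
  (![1, Q φ, S φ] : Fin 3 → ℝ) ⨯₃
    ![0, deriv P φ + deriv Q φ * x, deriv R φ + deriv S φ * x]

open Matrix

section CrossProduct

variable {R : Type*} [CommRing R]

theorem cross_add_smul_cross_add_smul (v w : Fin 3 → R) (s t : R) :
    (v + s • w) ⨯₃ (v + t • w) = (t - s) • (v ⨯₃ w) := by
  simp only [map_add, map_smul, LinearMap.add_apply, LinearMap.smul_apply, cross_self,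
    ← cross_anticomm w v]
  module

theorem cross_cross_cross_left (a b c : Fin 3 → R) :
    (a ⨯₃ b) ⨯₃ (a ⨯₃ c) = (a ⬝ᵥ b ⨯₃ c) • a := by
  rw [cross_cross_eq_smul_sub_smul', dot_self_cross, zero_smul, sub_zero, dotProduct_comm,
    triple_product_permutation]

end CrossProduct

theorem eulerNormal_eq_add_smul (P Q R S : ℝ → ℝ) (x φ : ℝ) :
    eulerNormal P Q R S x φ =
      ![1, Q φ, S φ] ⨯₃ ![0, deriv P φ, deriv R φ] +
        x • (![1, Q φ, S φ] ⨯₃ ![0, deriv Q φ, deriv S φ]) := by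
  rw [eulerNormal, ← map_smul, ← map_add, smul_vec3, vec3_add]
  congr 2 <;> simp [mul_comm x]

theorem eulerNormal_triple_product (P Q R S : ℝ → ℝ) (φ : ℝ) :
    ![1, Q φ, S φ] ⬝ᵥ ![0, deriv P φ, deriv R φ] ⨯₃ ![0, deriv Q φ, deriv S φ] =
      deriv S φ * deriv P φ - deriv Q φ * deriv R φ := by
  simp [cross_apply, mul_comm]

theorem euler_normal_constant_along_rulings_general
    (P Q R S : ℝ → ℝ)
    (hdev : ∀ φ, deriv S φ * deriv P φ = deriv Q φ * deriv R φ) :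
    ∀ x₁ x₂ φ : ℝ, eulerNormal P Q R S x₁ φ ⨯₃ eulerNormal P Q R S x₂ φ = 0 := by
  intro x₁ x₂ φ
  rw [eulerNormal_eq_add_smul, eulerNormal_eq_add_smul, cross_add_smul_cross_add_smul, cross_cross_cross_left,
    eulerNormal_triple_product, hdev φ, sub_self, zero_smul, smul_zero]

theorem euler_normal_constant_along_rulings
    (P Q R S : ℝ → ℝ)
    (hP : Differentiable ℝ P) (hQ : Differentiable ℝ Q)
    (hR : Differentiable ℝ R) (hS : Differentiable ℝ S)
    (hdev : ∀ φ, deriv S φ * deriv P φ = deriv Q φ * deriv R φ) :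
    ∀ x₁ x₂ φ : ℝ, eulerNormal P Q R S x₁ φ ⨯₃ eulerNormal P Q R S x₂ φ = 0 :=
  euler_normal_constant_along_rulings_general P Q R S hdev
end
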